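/- arXiv:2106.10357 — 2 statements merged into one kernel-verified Lean document; each statement's English description precedes it below -/
import Mathlib

section
/- Let K be a quadratic number field with ring of integers O_K, let σ be the nontrivial automorphism of K over ℚ, and let α, β ∈ O_K with I = ⟨α, β⟩ a nonzero ideal. Write q(x,y) = N_{K/ℚ}(-βx + αy)/N(I), a binary quadratic form with integer coefficients. For any homogeneous polynomial δ ∈ ℤ[x,y] of degree n, one has Res(q, δ) = ±1 if and only if Iⁿ = (δ(α, β)) as ideals of O_K. -/
/-- Sylvester-style resultant of a binary quadratic form `q = Σ a k • x^k y^(2-k)`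
and a binary degree-`n` form `δ = Σ t k • x^k y^(n-k)`:  the determinant of the
`(n+2) × (n+2)` Sylvester matrix whose first `n` rows carry the coefficients of `q`
and whose last `2` rows carry the coefficients of `δ`. -/
def sylvesterDet {R : Type*} [CommRing R] (n : ℕ) (a : Fin 3 → R) (t : Fin (n + 1) → R) : R :=
  Matrix.det (Matrix.of fun i j : Fin (n + 2) =>
    if (i : ℕ) < n then
      if h : (i : ℕ) ≤ (j : ℕ) ∧ (j : ℕ) ≤ (i : ℕ) + 2 then
        a ⟨2 - ((j : ℕ) - (i : ℕ)), by omega⟩ else 0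
    else
      if h : (i : ℕ) - n ≤ (j : ℕ) ∧ (j : ℕ) ≤ ((i : ℕ) - n) + n then
        t ⟨n - ((j : ℕ) - ((i : ℕ) - n)), by omega⟩ else 0)

/-- Evaluation of the binary degree-`m` form with coefficients `a` at the point `(u, v)`. -/
def evalForm {R : Type*} [CommRing R] (m : ℕ) (a : Fin (m + 1) → R) (u v : R) : R :=
  ∑ i : Fin (m + 1), a i * u ^ (i : ℕ) * v ^ (m - (i : ℕ))

/-!
Let `φ, ψ` be the two complex embeddings of `K` and `N = N(I)`. Then
`N · q(x, y) = (φ α y - φ β x) (ψ α y - ψ β x)`. The resultant is multiplicative, and the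
resultant of `δ` with a linear form `u y - v x` is `(-1)ⁿ δ(u, v)`, so
`Nⁿ · Res(q, δ) = δ(φ α, φ β) · δ(ψ α, ψ β) = N_{K/ℚ}(δ(α, β))`.
As `δ(α, β) ∈ Iⁿ`, the ideal `(δ(α, β))` equals `Iⁿ` exactly when both have the same norm
`Nⁿ`, i.e. when `Res(q, δ) = ±1`.
-/

namespace BinaryForm

open Polynomial

variable {R S : Type*} [CommRing R] [CommRing S]

lemma map_sylvesterDet (f : R →+* S) (n : ℕ) (q : Fin 3 → R) (t : Fin (n + 1) → R) :
    f (sylvesterDet n q t) = sylvesterDet n (f ∘ q) (f ∘ t) := by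
  rw [sylvesterDet, sylvesterDet, RingHom.map_det]
  congr 1
  ext i j
  simp only [RingHom.mapMatrix_apply, Matrix.map_apply, Matrix.of_apply, apply_ite f,
    apply_dite f, map_zero, Function.comp_apply]

lemma map_evalForm (f : R →+* S) (m : ℕ) (a : Fin (m + 1) → R) (u v : R) :
    f (evalForm m a u v) = evalForm m (f ∘ a) (f u) (f v) := by
  simp [evalForm]

lemma comp_vec3 {α β : Type*} (f : α → β) (x y z : α) : f ∘ ![x, y, z] = ![f x, f y, f z] :=
  (FinVec.map_eq f _).symm

lemma evalForm_mem_pow {I : Ideal R} {u v : R} (hu : u ∈ I) (hv : v ∈ I) (m : ℕ)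
    (a : Fin (m + 1) → R) : evalForm m a u v ∈ I ^ m := by
  refine Ideal.sum_mem _ fun i _ => ?_
  rw [mul_assoc, ← pow_mul_pow_sub I (Nat.le_of_lt_succ i.isLt)]
  exact Ideal.mul_mem_left _ _ (Ideal.mul_mem_mul (Ideal.pow_mem_pow hu _) (Ideal.pow_mem_pow hv _))

/-- The form with coefficients `a` restricted to `x = 1`, as a polynomial in `y`. In this
normalisation the matrix in `sylvesterDet` is the transpose of `Polynomial.sylvester`. -/
noncomputable def dehom (m : ℕ) (a : Fin (m + 1) → R) : R[X] :=
  ∑ i : Fin (m + 1), monomial (m - i) (a i)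

lemma coeff_dehom (m : ℕ) (a : Fin (m + 1) → R) (k : ℕ) :
    (dehom m a).coeff k = if h : k ≤ m then a ⟨m - k, by omega⟩ else 0 := by
  simp only [dehom, finsetSum_coeff, coeff_monomial]
  split_ifs with h
  · rw [Finset.sum_eq_single ⟨m - k, by omega⟩
      (fun i _ hi => if_neg fun h' => hi (Fin.ext (by simp only; omega))) (by simp)]
    exact if_pos (by simp only; omega)
  · exact Finset.sum_eq_zero fun i _ => if_neg (by omega)

lemma natDegree_dehom_le (m : ℕ) (a : Fin (m + 1) → R) : (dehom m a).natDegree ≤ m :=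
  natDegree_le_iff_coeff_eq_zero.mpr fun k hk => by
    rw [coeff_dehom, dif_neg (by exact_mod_cast not_le.mpr hk)]

lemma eval_dehom (m : ℕ) (a : Fin (m + 1) → R) (x : R) :
    (dehom m a).eval x = ∑ i : Fin (m + 1), a i * x ^ (m - (i : ℕ)) := by
  simp [dehom, eval_finsetSum]

lemma dehom_two (q : Fin 3 → R) : dehom 2 q = C (q 0) * X ^ 2 + C (q 1) * X + C (q 2) := by
  simp [dehom, Fin.sum_univ_three, ← C_mul_X_pow_eq_monomial]

lemma dehom_smul (m : ℕ) (c : R) (a : Fin (m + 1) → R) : dehom m (c • a) = C c * dehom m a := by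
  simp [dehom, Finset.mul_sum, C_mul_monomial]

theorem sylvesterDet_eq_resultant (n : ℕ) (q : Fin 3 → R) (t : Fin (n + 1) → R) :
    sylvesterDet n q t = resultant (dehom n t) (dehom 2 q) n 2 := by
  rw [sylvesterDet, resultant, ← Matrix.det_transpose]
  congr 1
  ext i j
  induction j using Fin.addCases <;>
  · simp only [sylvester, coeff_dehom, Matrix.transpose_apply, Matrix.of_apply, Set.mem_Icc,
      Fin.addCases_left, Fin.addCases_right, Fin.val_castAdd, Fin.val_natAdd]
    split_ifs <;> first | rfl | omega | (congr 1; ext; dsimp only; omega)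

lemma pow_mul_sylvesterDet (n : ℕ) (c : R) (q : Fin 3 → R) (t : Fin (n + 1) → R) :
    c ^ n * sylvesterDet n q t = sylvesterDet n (c • q) t := by
  rw [sylvesterDet_eq_resultant, sylvesterDet_eq_resultant, dehom_smul, resultant_C_mul_right]

section Field

variable {K : Type*} [Field K]

lemma mul_pow_eval_dehom (m : ℕ) (a : Fin (m + 1) → K) {u : K} (hu : u ≠ 0) (v : K) :
    u ^ m * (dehom m a).eval (v / u) = evalForm m a u v := by
  rw [eval_dehom, evalForm, Finset.mul_sum]
  refine Finset.sum_congr rfl fun i _ => ?_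
  rw [div_pow, ← pow_mul_pow_sub u (Nat.le_of_lt_succ i.isLt)]
  field_simp

lemma resultant_dehom_linear (m : ℕ) (a : Fin (m + 1) → K) {u : K} (hu : u ≠ 0) (v : K) :
    resultant (dehom m a) (C u * (X - C (v / u))) m 1 = (-1) ^ m * evalForm m a u v := by
  rw [resultant_C_mul_right, resultant_X_sub_C_right _ _ _ (natDegree_dehom_le m a),
    ← mul_pow_eval_dehom m a hu v]
  ring

lemma resultant_dehom_mul_linear (n : ℕ) (t : Fin (n + 1) → K) {u u' : K} (hu : u ≠ 0)
    (hu' : u' ≠ 0) (v v' : K) :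
    resultant (dehom n t) (dehom 2 ![u * u', -(u * v' + u' * v), v * v']) n 2 =
      evalForm n t u v * evalForm n t u' v' := by
  have hlin : ∀ {w : K}, w ≠ 0 → ∀ z : K, C w * (X - C (z / w)) = C w * X - C z := by
    intro w hw z
    rw [mul_sub, ← C_mul, mul_div_cancel₀ _ hw]
  have hfactor : dehom 2 ![u * u', -(u * v' + u' * v), v * v'] =
      C u * (X - C (v / u)) * (C u' * (X - C (v' / u'))) := by
    rw [dehom_two, hlin hu, hlin hu']
    simp only [Matrix.cons_val_zero, Matrix.cons_val_one, Matrix.cons_val_two, Matrix.head_cons,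
      Matrix.tail_cons, map_mul, map_neg, map_add]
    ring
  have hmul := resultant_mul_right (dehom n t) (C u * (X - C (v / u)))
    (C u' * (X - C (v' / u'))) n (natDegree_dehom_le n t)
  rw [natDegree_C_mul hu, natDegree_C_mul hu', natDegree_X_sub_C, natDegree_X_sub_C] at hmul
  rw [hfactor, hmul, resultant_dehom_linear n t hu, resultant_dehom_linear n t hu',
    mul_mul_mul_comm, ← mul_pow, neg_one_mul, neg_neg, one_pow, one_mul]

end Field

/- Both sides are polynomials over `ℤ` in `u, v, u', v', t`; for indeterminates, `u` and `u'`
are nonzero in the fraction field, where the resultant factors as above. -/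
open MvPolynomial in
theorem sylvesterDet_mul_linear (n : ℕ) (u v u' v' : R) (t : Fin (n + 1) → R) :
    sylvesterDet n ![u * u', -(u * v' + u' * v), v * v'] t =
      evalForm n t u v * evalForm n t u' v' := by
  let x : Fin 4 → MvPolynomial (Fin 4 ⊕ Fin (n + 1)) ℤ := fun i => X (Sum.inl i)
  let T : Fin (n + 1) → MvPolynomial (Fin 4 ⊕ Fin (n + 1)) ℤ := fun i => X (Sum.inr i)
  have generic : sylvesterDet n ![x 0 * x 2, -(x 0 * x 3 + x 2 * x 1), x 1 * x 3] T =
      evalForm n T (x 0) (x 1) * evalForm n T (x 2) (x 3) := by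
    let ι := algebraMap (MvPolynomial (Fin 4 ⊕ Fin (n + 1)) ℤ)
      (FractionRing (MvPolynomial (Fin 4 ⊕ Fin (n + 1)) ℤ))
    have hι : Function.Injective ι := IsFractionRing.injective _ _
    apply hι
    rw [map_sylvesterDet, map_mul, map_evalForm, map_evalForm, comp_vec3,
      sylvesterDet_eq_resultant, map_mul ι, map_neg ι, map_add ι, map_mul ι, map_mul ι, map_mul ι]
    exact resultant_dehom_mul_linear n _ ((map_ne_zero_iff ι hι).mpr (X_ne_zero _))
      ((map_ne_zero_iff ι hι).mpr (X_ne_zero _)) _ _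
  have := congrArg (eval₂Hom (Int.castRingHom R) (Sum.elim ![u, v, u', v'] t)) generic
  rw [map_sylvesterDet, map_mul, map_evalForm, map_evalForm, comp_vec3] at this
  simpa [x, T, Function.comp_def] using this

end BinaryForm

open NumberField BinaryForm

lemma Ideal.eq_of_le_of_absNorm_eq {S : Type*} [CommRing S] [IsDedekindDomain S]
    [Module.Free ℤ S] {I J : Ideal S} (hle : J ≤ I)
    (hI : absNorm I ≠ 0) (h : absNorm J = absNorm I) : J = I := by
  obtain ⟨L, rfl⟩ := Ideal.dvd_iff_le.mpr hle
  rw [map_mul, Nat.mul_eq_left hI, absNorm_eq_one_iff] at h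
  rw [h, mul_top]

lemma NumberField.exists_norm_eq_mul_of_finrank_eq_two {K : Type*} [Field K] [NumberField K]
    (h2 : Module.finrank ℚ K = 2) :
    ∃ φ ψ : 𝓞 K →+* ℂ, ∀ x : 𝓞 K, ((Algebra.norm ℤ x : ℤ) : ℂ) = φ x * ψ x := by
  classical
  have hcard : (Finset.univ : Finset (K →ₐ[ℚ] ℂ)).card = 2 := by
    rw [Finset.card_univ, AlgHom.card, h2]
  obtain ⟨φ, ψ, hne, huniv⟩ := Finset.card_eq_two.mp hcard
  refine ⟨(φ : K →+* ℂ).comp (algebraMap (𝓞 K) K), (ψ : K →+* ℂ).comp (algebraMap (𝓞 K) K),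
    fun x => ?_⟩
  have := Algebra.norm_eq_prod_embeddings ℚ ℂ (x : K)
  rw [huniv, Finset.prod_pair hne, ← Algebra.coe_norm_int] at this
  simpa using this

theorem NumberField.pow_mul_sylvesterDet_eq_norm {K : Type*} [Field K] [NumberField K]
    (h2 : Module.finrank ℚ K = 2) (α β : 𝓞 K) (A B C N : ℤ)
    (hA : A * N = Algebra.norm ℤ β) (hC : C * N = Algebra.norm ℤ α)
    (hB : (A + B + C) * N = Algebra.norm ℤ (α - β)) (n : ℕ) (t : Fin (n + 1) → ℤ) :
    N ^ n * sylvesterDet n ![C, B, A] t =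
      Algebra.norm ℤ (evalForm n (fun i => (t i : 𝓞 K)) α β) := by
  obtain ⟨φ, ψ, hnorm⟩ := exists_norm_eq_mul_of_finrank_eq_two h2
  apply Int.cast_injective (α := ℂ)
  have hA' : (N : ℂ) * A = φ β * ψ β := by rw [← hnorm, ← hA]; push_cast; ring
  have hC' : (N : ℂ) * C = φ α * ψ α := by rw [← hnorm, ← hC]; push_cast; ring
  have hB' : (N : ℂ) * B = -(φ α * ψ β + ψ α * φ β) := by
    have h := congrArg (Int.cast : ℤ → ℂ) hB
    rw [hnorm, map_sub, map_sub] at h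
    push_cast at h
    linear_combination h - hA' - hC'
  have hcoeffs : (N : ℂ) • (Int.castRingHom ℂ ∘ ![C, B, A]) =
      ![φ α * ψ α, -(φ α * ψ β + ψ α * φ β), φ β * ψ β] := by
    rw [comp_vec3, ← hA', ← hB', ← hC']
    simp
  have hδ : ∀ f : 𝓞 K →+* ℂ, evalForm n (Int.castRingHom ℂ ∘ t) (f α) (f β) =
      f (evalForm n (fun i => (t i : 𝓞 K)) α β) := by
    intro f
    rw [map_evalForm]
    congr 1
    ext i
    simp
  rw [hnorm, ← hδ φ, ← hδ ψ, Int.cast_mul, Int.cast_pow, ← sylvesterDet_mul_linear, ← hcoeffs,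
    ← pow_mul_sylvesterDet, ← map_sylvesterDet, eq_intCast]

/-- Let `K` be a quadratic number field, `α, β ∈ O_K` with `I = ⟨α, β⟩` a nonzero ideal.
Let `q = A x² + B xy + C y² = N_{K/ℚ}(-βx + αy)/N(I)` (encoded by
`A·N(I) = N(β)`, `C·N(I) = N(α)` and `q(1,1)·N(I) = N(α - β)`).  Then for a degree-`n`
form `δ = Σ tᵢ xⁱ y^{n-i}`, one has `Res(q, δ) = ±1` iff `Iⁿ = (δ(α, β))` in `O_K`. -/
theorem stmt2 {K : Type*} [Field K] [NumberField K]
    (h2 : Module.finrank ℚ K = 2)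
    (α β : 𝓞 K) (hI : Ideal.span {α, β} ≠ ⊥)
    (A B C : ℤ)
    (hA : A * (Ideal.absNorm (Ideal.span {α, β}) : ℤ) = Algebra.norm ℤ β)
    (hC : C * (Ideal.absNorm (Ideal.span {α, β}) : ℤ) = Algebra.norm ℤ α)
    (hB : (A + B + C) * (Ideal.absNorm (Ideal.span {α, β}) : ℤ) = Algebra.norm ℤ (α - β))
    (n : ℕ) (t : Fin (n + 1) → ℤ) :
    (sylvesterDet n ![C, B, A] t = 1 ∨ sylvesterDet n ![C, B, A] t = -1) ↔
      Ideal.span {α, β} ^ n =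
        Ideal.span {∑ i : Fin (n + 1), (t i : 𝓞 K) * α ^ (i : ℕ) * β ^ (n - (i : ℕ))} := by
  set I := Ideal.span {α, β}
  set δ := evalForm n (fun i => (t i : 𝓞 K)) α β
  have hnorm := pow_mul_sylvesterDet_eq_norm h2 α β A B C _ hA hC hB n t
  have hmem : δ ∈ I ^ n :=
    evalForm_mem_pow (Ideal.subset_span (by simp)) (Ideal.subset_span (by simp)) n _
  have hN : Ideal.absNorm I ^ n ≠ 0 := pow_ne_zero n (Ideal.absNorm_eq_zero_iff.not.mpr hI)
  change _ ↔ I ^ n = Ideal.span {δ}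
  rw [eq_comm (a := I ^ n), show (_ ∨ _) ↔ (sylvesterDet n ![C, B, A] t).natAbs = 1 by omega]
  constructor
  · intro hres
    refine Ideal.eq_of_le_of_absNorm_eq ((Ideal.span_singleton_le_iff_mem _).mpr hmem)
      (by rwa [map_pow]) ?_
    rw [Ideal.absNorm_span_singleton, ← hnorm, Int.natAbs_mul, Int.natAbs_pow, Int.natAbs_natCast,
      hres, mul_one, map_pow]
  · intro hspan
    have := congrArg Ideal.absNorm hspan
    rw [Ideal.absNorm_span_singleton, ← hnorm, Int.natAbs_mul, Int.natAbs_pow, Int.natAbs_natCast,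
      map_pow] at this
    exact (Nat.mul_eq_left hN).mp this
end

section
/- Let S be a commutative ring, f ∈ S[x] a monic polynomial of degree 2, and R = S[x]/(f). Then the fiber product ring S[x] ×_R S (pairs (g, s) with g mod f equal to the image of s) is a free S-module; a basis is given by 1 together with the elements xⁿ - cₙx for n ≥ 2, where xⁿ ≡ cₙx + dₙ mod (f) with cₙ, dₙ ∈ S. -/
/-!
The functional `φ g = (g mod f).coeff 1` is `S`-linear and takes the value `1` on `x`, because
`deg x < deg f`. Hence `S[x] = ker φ ⊕ S·x`, and projecting the monomial basis `(xⁿ)_{n ≠ 1}`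
along `x`, i.e. `xⁿ ↦ xⁿ - φ(xⁿ) x`, gives a basis of `ker φ`; for `n = 0` this is `1`, since
`φ 1 = 0`.
-/

open Polynomial

variable {S : Type*} [CommRing S]

/-- The `S`-linear map `S[x] → S` sending `g` to the `x`-coefficient of `g mod f`
(division with remainder by the monic polynomial `f`). Its kernel is the fiber product
`S[x] ×_{S[x]/(f)} S`, i.e. the subring of polynomials whose reduction mod `f` has
vanishing `x`-coefficient. -/
noncomputable def xCoeffMod (f : Polynomial S) : Polynomial S →ₗ[S] S where
  toFun g := (g %ₘ f).coeff 1
  map_add' p q := by simp [Polynomial.add_modByMonic]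
  map_smul' c p := by simp [Polynomial.smul_modByMonic]

namespace LinearMap

variable {R M ι : Type*} [Ring R] [AddCommGroup M] [Module R M]

def kerProjOfApplyEqOne (φ : M →ₗ[R] R) (x : M) (hx : φ x = 1) : M →ₗ[R] ker φ :=
  codRestrict (ker φ) (id - φ.smulRight x) fun m => by simp [hx]

variable {φ : M →ₗ[R] R} {x : M}

@[simp]
lemma kerProjOfApplyEqOne_apply (hx : φ x = 1) (m : M) :
    (kerProjOfApplyEqOne φ x hx m : M) = m - φ m • x := rfl

lemma kerProjOfApplyEqOne_self (hx : φ x = 1) : kerProjOfApplyEqOne φ x hx x = 0 := by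
  ext; simp [hx]

lemma kerProjOfApplyEqOne_surjective (hx : φ x = 1) :
    Function.Surjective (kerProjOfApplyEqOne φ x hx) :=
  fun k => ⟨k, by ext; simp [mem_ker.mp k.2]⟩

variable (b : Module.Basis ι R M) {i₀ : ι} (h : φ (b i₀) = 1)

lemma linearIndependent_kerProjOfApplyEqOne_basis :
    LinearIndependent R fun i : ({i₀}ᶜ : Set ι) => kerProjOfApplyEqOne φ (b i₀) h (b i) := by
  -- Away from `i₀`, the `b`-coordinates of `b i - φ (b i) • b i₀` are those of `b i`.
  refine LinearIndependent.of_comp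
    ((Finsupp.lsubtypeDomain ({i₀}ᶜ : Set ι)).comp (b.repr.toLinearMap.comp (ker φ).subtype)) ?_
  convert (Finsupp.basisSingleOne : Module.Basis ({i₀}ᶜ : Set ι) R _).linearIndependent
  ext i j
  have hj : (j : ι) ≠ i₀ := j.2
  simpa [Finsupp.lsubtypeDomain_apply, hj.symm] using
    Finsupp.single_apply_left Subtype.val_injective i j (1 : R)

lemma top_le_span_kerProjOfApplyEqOne_basis :
    ⊤ ≤ Submodule.span R
      (Set.range fun i : ({i₀}ᶜ : Set ι) => kerProjOfApplyEqOne φ (b i₀) h (b i)) := by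
  rintro _ -
  obtain ⟨m, rfl⟩ := kerProjOfApplyEqOne_surjective h ‹ker φ›
  have hm : kerProjOfApplyEqOne φ (b i₀) h m ∈
      Submodule.span R (Set.range (kerProjOfApplyEqOne φ (b i₀) h ∘ b)) := by
    rw [Set.range_comp, ← Submodule.map_span, b.span_eq]
    exact Submodule.mem_map_of_mem Submodule.mem_top
  refine Submodule.span_le.mpr ?_ hm
  rintro _ ⟨i, rfl⟩
  by_cases hi : i = i₀
  · simp [hi, kerProjOfApplyEqOne_self]
  · exact Submodule.subset_span ⟨⟨i, hi⟩, rfl⟩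

noncomputable def basisKerOfApplyEqOne : Module.Basis ({i₀}ᶜ : Set ι) R (ker φ) :=
  .mk (linearIndependent_kerProjOfApplyEqOne_basis b h)
    (top_le_span_kerProjOfApplyEqOne_basis b h)

@[simp]
lemma basisKerOfApplyEqOne_apply (i : ({i₀}ᶜ : Set ι)) :
    (basisKerOfApplyEqOne b h i : M) = b i - φ (b i) • b i₀ := by
  simp [basisKerOfApplyEqOne]

end LinearMap

def natEquivComplOne : ℕ ≃ ({1}ᶜ : Set ℕ) where
  toFun j := ⟨if j = 0 then 0 else j + 1, by split_ifs with hj <;> simp [hj]⟩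
  invFun n := if (n : ℕ) = 0 then 0 else n - 1
  left_inv j := by by_cases hj : j = 0 <;> simp [hj]
  right_inv n := by
    obtain ⟨n, hn : n ≠ 1⟩ := n
    ext; dsimp only; split_ifs <;> omega

@[simp]
lemma coe_natEquivComplOne (j : ℕ) : (natEquivComplOne j : ℕ) = if j = 0 then 0 else j + 1 := rfl

lemma xCoeffMod_of_natDegree_lt {f p : S[X]} (hf : f.Monic) (hp : p.natDegree < f.natDegree) :
    xCoeffMod f p = p.coeff 1 := by
  nontriviality S
  exact congrArg (coeff · 1) ((modByMonic_eq_self_iff hf).mpr (degree_lt_degree hp))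

/-- Let `f ∈ S[x]` be monic of degree 2 and `R = S[x]/(f)`.  The fiber product
`S[x] ×_R S` (polynomials whose reduction mod `f` has vanishing `x`-coefficient) is a
free `S`-module, with basis given by `1` together with the elements `xⁿ - cₙ·x` for
`n ≥ 2`, where `xⁿ ≡ cₙ x + dₙ mod (f)`.  (Index `j = 0` gives `1`; index `j ≥ 1`
gives the basis element for `n = j + 1`.) -/
theorem stmt10 (f : Polynomial S) (hf : f.Monic) (hdeg : f.natDegree = 2) :
    ∃ B : Module.Basis ℕ S (LinearMap.ker (xCoeffMod f)),
      ∀ j : ℕ, (B j : Polynomial S) =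
        if j = 0 then 1
        else X ^ (j + 1) - C ((X ^ (j + 1) %ₘ f).coeff 1) * X := by
  have hX : xCoeffMod f (basisMonomials S 1) = 1 := by
    simpa [monomial_one_right_eq_X_pow] using
      xCoeffMod_of_natDegree_lt hf (natDegree_X_le.trans_lt (by omega))
  have h1 : xCoeffMod f 1 = 0 := by
    simpa [coeff_one] using xCoeffMod_of_natDegree_lt hf (p := 1) (by simp [hdeg])
  refine ⟨(LinearMap.basisKerOfApplyEqOne _ hX).reindex natEquivComplOne.symm, fun j => ?_⟩
  rw [Module.Basis.reindex_apply, Equiv.symm_symm, LinearMap.basisKerOfApplyEqOne_apply,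
    coe_natEquivComplOne, coe_basisMonomials]
  by_cases hj : j = 0
  · simp [hj, h1]
  · simp [hj, monomial_one_right_eq_X_pow, smul_eq_C_mul, xCoeffMod]
end
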